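/- arXiv:2504.11304 — 2 statements merged into one kernel-verified Lean document; each statement's English description precedes it below -/
import Mathlib

section
/- Shooting-vector sensitivity of geodesic regression in the zero-curvature (Euclidean) case (flat instance of Theorem D.1): Let H be a real inner product space, p ∈ H a fixed footpoint, τ ≥ 0, n ≥ 1, and let D = {(x_i, y_i)}_{i=1}^n and D' = {(x_i', y_i')}_{i=1}^n be adjacent datasets in ℝ × H, i.e. (x_i', y_i') = (x_i, y_i) for all i < n, with x_n, x_n' ∈ [0,1]. If v ∈ H satisfies ‖y_n − p − x_n·v‖ ≤ τ and ‖y_n' − p − x_n'·v‖ ≤ τ, then ‖ (1/n)·Σ_{i=1}^n x_i·(p + x_i·v − y_i) − (1/n)·Σ_{i=1}^n x_i'·(p + x_i'·v − y_i') ‖ ≤ 2τ/n. -/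
/-!
Adjacent datasets share every summand of the gradient except the one at the last index, so the
difference of the two gradients is `1/n` times the difference of two single terms
`x • (p + x • v - y)`. Each of these has norm at most `τ`, because `|x| ≤ 1` and
`p + x • v - y` is the negated residual, so the triangle inequality gives `2τ/n`.
-/

theorem Fintype.sum_sub_sum_eq_of_eq_off {ι M : Type*} [Fintype ι] [AddCommGroup M]
    {f g : ι → M} (m : ι) (h : ∀ i ≠ m, f i = g i) :
    ∑ i, f i - ∑ i, g i = f m - g m := by
  rw [← Finset.sum_sub_distrib, Fintype.sum_eq_single m fun i hi => by rw [h i hi, sub_self]]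

theorem norm_smul_add_smul_sub_le_of_mem_Icc {E : Type*} [SeminormedAddCommGroup E]
    [NormedSpace ℝ E] {p v y : E} {x τ : ℝ} (hx : x ∈ Set.Icc (0 : ℝ) 1)
    (hres : ‖y - p - x • v‖ ≤ τ) :
    ‖x • (p + x • v - y)‖ ≤ τ :=
  calc ‖x • (p + x • v - y)‖ = |x| * ‖y - p - x • v‖ := by
        rw [norm_smul, Real.norm_eq_abs, norm_sub_rev, sub_sub]
    _ ≤ ‖y - p - x • v‖ :=
        mul_le_of_le_one_left (norm_nonneg _) (abs_le.2 ⟨by linarith [hx.1], hx.2⟩)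
    _ ≤ τ := hres

theorem shooting_vector_sensitivity_flat_general
    {H : Type*} [NormedAddCommGroup H] [InnerProductSpace ℝ H]
    (p : H) (τ : ℝ) (n : ℕ) (hn : 1 ≤ n)
    (x x' : Fin n → ℝ) (y y' : Fin n → H)
    (hadj : ∀ i : Fin n, (i : ℕ) + 1 < n → x' i = x i ∧ y' i = y i)
    (hxn : x ⟨n - 1, Nat.sub_lt hn one_pos⟩ ∈ Set.Icc (0 : ℝ) 1)
    (hxn' : x' ⟨n - 1, Nat.sub_lt hn one_pos⟩ ∈ Set.Icc (0 : ℝ) 1)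
    (v : H)
    (hlast : ‖y ⟨n - 1, Nat.sub_lt hn one_pos⟩ - p
        - x ⟨n - 1, Nat.sub_lt hn one_pos⟩ • v‖ ≤ τ)
    (hlast' : ‖y' ⟨n - 1, Nat.sub_lt hn one_pos⟩ - p
        - x' ⟨n - 1, Nat.sub_lt hn one_pos⟩ • v‖ ≤ τ) :
    ‖(1 / (n : ℝ)) • ∑ i, x i • (p + x i • v - y i)
      - (1 / (n : ℝ)) • ∑ i, x' i • (p + x' i • v - y' i)‖ ≤ 2 * τ / n := by
  set m : Fin n := ⟨n - 1, Nat.sub_lt hn one_pos⟩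
  have hagree : ∀ i ≠ m, x i • (p + x i • v - y i) = x' i • (p + x' i • v - y' i) := by
    intro i hi
    have hlt : (i : ℕ) + 1 < n := by
      have : (i : ℕ) ≠ n - 1 := Fin.val_ne_of_ne hi
      omega
    obtain ⟨hx, hy⟩ := hadj i hlt
    rw [hx, hy]
  have hn_pos : (0 : ℝ) < n := by exact_mod_cast hn
  calc ‖(1 / (n : ℝ)) • ∑ i, x i • (p + x i • v - y i)
        - (1 / (n : ℝ)) • ∑ i, x' i • (p + x' i • v - y' i)‖
      = (1 / n) * ‖x m • (p + x m • v - y m) - x' m • (p + x' m • v - y' m)‖ := by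
        rw [← smul_sub, norm_smul, Fintype.sum_sub_sum_eq_of_eq_off m hagree,
          Real.norm_of_nonneg (by positivity)]
    _ ≤ (1 / n) * (τ + τ) := by
        gcongr
        exact (norm_sub_le _ _).trans (add_le_add
          (norm_smul_add_smul_sub_le_of_mem_Icc hxn hlast)
          (norm_smul_add_smul_sub_le_of_mem_Icc hxn' hlast'))
    _ = 2 * τ / n := by ring

/-- Shooting-vector sensitivity of geodesic regression in the zero-curvature
(Euclidean) case. -/
theorem shooting_vector_sensitivity_flat
    {H : Type*} [NormedAddCommGroup H] [InnerProductSpace ℝ H]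
    (p : H) (τ : ℝ) (hτ : 0 ≤ τ) (n : ℕ) (hn : 1 ≤ n)
    (x x' : Fin n → ℝ) (y y' : Fin n → H)
    (hadj : ∀ i : Fin n, (i : ℕ) + 1 < n → x' i = x i ∧ y' i = y i)
    (hxn : x ⟨n - 1, Nat.sub_lt hn one_pos⟩ ∈ Set.Icc (0 : ℝ) 1)
    (hxn' : x' ⟨n - 1, Nat.sub_lt hn one_pos⟩ ∈ Set.Icc (0 : ℝ) 1)
    (v : H)
    (hlast : ‖y ⟨n - 1, Nat.sub_lt hn one_pos⟩ - p
        - x ⟨n - 1, Nat.sub_lt hn one_pos⟩ • v‖ ≤ τ)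
    (hlast' : ‖y' ⟨n - 1, Nat.sub_lt hn one_pos⟩ - p
        - x' ⟨n - 1, Nat.sub_lt hn one_pos⟩ • v‖ ≤ τ) :
    ‖(1 / (n : ℝ)) • ∑ i, x i • (p + x i • v - y i)
      - (1 / (n : ℝ)) • ∑ i, x' i • (p + x' i • v - y' i)‖ ≤ 2 * τ / n :=
  shooting_vector_sensitivity_flat_general p τ n hn x x' y y' hadj hxn hxn' v hlast hlast'
end

section
/- Pure differential privacy of the K-Norm Gradient (KNG) mechanism in normed-space form: Let (Z, 𝒜, ν) be a measure space, H a real normed space, σ > 0, Δ ≥ 0, and let G₁, G₂ : Z → H be measurable maps with ‖G₁(z) − G₂(z)‖ ≤ Δ for all z ∈ Z. Assume 0 < ∫_Z exp(−‖G_j(z)‖/σ) dν(z) < ∞ for j = 1, 2. Then for every measurable set A ⊆ Z, (∫_A exp(−‖G₁(z)‖/σ) dν(z)) / (∫_Z exp(−‖G₁(z)‖/σ) dν(z)) ≤ exp(2Δ/σ) · (∫_A exp(−‖G₂(z)‖/σ) dν(z)) / (∫_Z exp(−‖G₂(z)‖/σ) dν(z)). -/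
/-!
If ‖G₁ z - G₂ z‖ ≤ Δ then the two unnormalised densities exp(-‖Gⱼ z‖/σ) are within a factor
exp(Δ/σ) of each other at every point, by the reverse triangle inequality. Integrating, the
numerators (over A) and the normalising constants (over Z) are each within that factor, and
one factor comes from each, giving exp(2Δ/σ) for the normalised probabilities.
-/

open MeasureTheory Real

lemma Real.exp_neg_norm_div_le_exp_mul {E : Type*} [SeminormedAddCommGroup E] {x y : E} {Δ σ : ℝ}
    (hσ : 0 ≤ σ) (hxy : ‖x - y‖ ≤ Δ) :
    exp (-‖x‖ / σ) ≤ exp (Δ / σ) * exp (-‖y‖ / σ) := by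
  have hnorm : ‖y‖ - ‖x‖ ≤ Δ := (norm_sub_norm_le y x).trans (norm_sub_rev y x ▸ hxy)
  rw [← exp_add, ← add_div, exp_le_exp]
  gcongr
  linarith

lemma div_le_sq_mul_div_of_le_mul {a b a' b' c : ℝ} (ha : a ≤ c * a') (hb : b' ≤ c * b)
    (hb₀ : 0 < b) (hb'₀ : 0 < b') (ha' : 0 ≤ a') :
    a / b ≤ c ^ 2 * (a' / b') := by
  have hc : 0 < c := pos_of_mul_pos_left (hb'₀.trans_le hb) hb₀.le
  rw [mul_div_assoc', div_le_div_iff₀ hb₀ hb'₀]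
  calc a * b' ≤ (c * a') * (c * b) := mul_le_mul ha hb hb'₀.le (by positivity)
    _ = c ^ 2 * a' * b := by ring

lemma setIntegral_div_integral_le_sq_mul {α : Type*} [MeasurableSpace α] {μ : Measure α}
    {f g : α → ℝ} {c : ℝ} (hf : Integrable f μ) (hg : Integrable g μ) (hg₀ : 0 ≤ g)
    (hfg : ∀ x, f x ≤ c * g x) (hgf : ∀ x, g x ≤ c * f x) (hf_pos : 0 < ∫ x, f x ∂μ)
    (s : Set α) :
    (∫ x in s, f x ∂μ) / (∫ x, f x ∂μ) ≤ c ^ 2 * ((∫ x in s, g x ∂μ) / (∫ x, g x ∂μ)) := by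
  have hf_le : ∫ x, f x ∂μ ≤ c * ∫ x, g x ∂μ := by
    rw [← integral_const_mul]
    exact integral_mono hf (hg.const_mul c) hfg
  have hg_le : ∫ x, g x ∂μ ≤ c * ∫ x, f x ∂μ := by
    rw [← integral_const_mul]
    exact integral_mono hg (hf.const_mul c) hgf
  have hf_le_on : ∫ x in s, f x ∂μ ≤ c * ∫ x in s, g x ∂μ := by
    rw [← integral_const_mul]
    exact setIntegral_mono hf.integrableOn (hg.const_mul c).integrableOn hfg
  have hg_pos : 0 < ∫ x, g x ∂μ := by
    refine (integral_nonneg hg₀).lt_of_ne fun hg_zero => ?_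
    rw [← hg_zero, mul_zero] at hf_le
    exact hf_le.not_gt hf_pos
  exact div_le_sq_mul_div_of_le_mul hf_le_on hg_le hf_pos hg_pos
    (integral_nonneg hg₀)

theorem kng_mechanism_pure_DP_general
    {Z : Type*} [MeasurableSpace Z] (ν : Measure Z)
    {H : Type*} [NormedAddCommGroup H]
    (σ Δ : ℝ) (hσ : 0 < σ)
    (G₁ G₂ : Z → H)
    (hdiff : ∀ z, ‖G₁ z - G₂ z‖ ≤ Δ)
    (hint₁ : Integrable (fun z => Real.exp (-‖G₁ z‖ / σ)) ν)
    (hint₂ : Integrable (fun z => Real.exp (-‖G₂ z‖ / σ)) ν)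
    (hpos₁ : 0 < ∫ z, Real.exp (-‖G₁ z‖ / σ) ∂ν)
    (A : Set Z) :
    (∫ z in A, Real.exp (-‖G₁ z‖ / σ) ∂ν) / (∫ z, Real.exp (-‖G₁ z‖ / σ) ∂ν)
      ≤ Real.exp (2 * Δ / σ) *
        ((∫ z in A, Real.exp (-‖G₂ z‖ / σ) ∂ν) / (∫ z, Real.exp (-‖G₂ z‖ / σ) ∂ν)) := by
  have hexp : exp (2 * Δ / σ) = exp (Δ / σ) ^ 2 := by
    rw [sq, ← exp_add]
    ring_nf
  rw [hexp]
  exact setIntegral_div_integral_le_sq_mul hint₁ hint₂ (fun z => (exp_pos _).le)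
    (fun z => exp_neg_norm_div_le_exp_mul hσ.le (hdiff z))
    (fun z => exp_neg_norm_div_le_exp_mul hσ.le (norm_sub_rev (G₁ z) (G₂ z) ▸ hdiff z))
    hpos₁ A

/-- Pure differential privacy of the K-Norm Gradient (KNG) mechanism in
normed-space form. -/
theorem kng_mechanism_pure_DP
    {Z : Type*} [MeasurableSpace Z] (ν : Measure Z)
    {H : Type*} [NormedAddCommGroup H] [MeasurableSpace H] [BorelSpace H]
    (σ Δ : ℝ) (hσ : 0 < σ) (hΔ : 0 ≤ Δ)
    (G₁ G₂ : Z → H) (hm₁ : Measurable G₁) (hm₂ : Measurable G₂)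
    (hdiff : ∀ z, ‖G₁ z - G₂ z‖ ≤ Δ)
    (hint₁ : Integrable (fun z => Real.exp (-‖G₁ z‖ / σ)) ν)
    (hint₂ : Integrable (fun z => Real.exp (-‖G₂ z‖ / σ)) ν)
    (hpos₁ : 0 < ∫ z, Real.exp (-‖G₁ z‖ / σ) ∂ν)
    (hpos₂ : 0 < ∫ z, Real.exp (-‖G₂ z‖ / σ) ∂ν)
    (A : Set Z) (hA : MeasurableSet A) :
    (∫ z in A, Real.exp (-‖G₁ z‖ / σ) ∂ν) / (∫ z, Real.exp (-‖G₁ z‖ / σ) ∂ν)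
      ≤ Real.exp (2 * Δ / σ) *
        ((∫ z in A, Real.exp (-‖G₂ z‖ / σ) ∂ν) / (∫ z, Real.exp (-‖G₂ z‖ / σ) ∂ν)) :=
  kng_mechanism_pure_DP_general ν σ Δ hσ G₁ G₂ hdiff hint₁ hint₂ hpos₁ A
end
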